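/- Let R be a local ring whose maximal ideal M contains a non-zero-divisor of R, and assume that M is either a principal ideal of R or a non-divisorial ideal of R. Then there is no ring T properly containing R such that Spec(R) = Spec(T). -/

import Mathlib

/-!
A ring `T ⊋ R` with `Spec R = Spec T` is very close to `R`: the maximal ideal `M` of `R` is
an ideal of `T` containing every non-unit of `T`, so a non-zero-divisor of `R` stays one in `T`.
Fix such an `m ∈ M`. If `M = aR`, then `t a ∈ aR` forces every `t ∈ T` into `R`. Otherwise any
`t ∈ T \ R` gives `(t m) / m ∈ (R : M) \ R`, and for a local ring this already makes `M`
divisorial: `(R : (R : M))` lies in `R` because `1 ∈ (R : M)`, and it cannot contain a unit.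
-/

/-- A subset `S` of a ring `A` is (the underlying set of) a prime ideal of the subring `B`. -/
def IsPrimeIdealSetOf {A : Type*} [CommRing A] (B : Subring A) (S : Set A) : Prop :=
  ∃ I : Ideal B, I.IsPrime ∧ Subtype.val '' (I : Set B) = S

/-- `Spec(R) = Spec(T)` for a subring `R` of `T`: a subset of `T` is a prime ideal of `T`
iff it is a prime ideal of `R`. -/
def SpecEq {T : Type*} [CommRing T] (R : Subring T) : Prop :=
  ∀ S : Set T, (∃ J : Ideal T, J.IsPrime ∧ (J : Set T) = S) ↔ IsPrimeIdealSetOf R S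
/-- The colon construction `(J₁ : J₂) = {x ∈ T(R) : x·J₂ ⊆ J₁}` for subsets of the total
quotient ring `T(R)`. -/
def colonSet (R : Type*) [CommRing R] (J₁ J₂ : Set (FractionRing R)) :
    Set (FractionRing R) :=
  {x : FractionRing R | ∀ j ∈ J₂, x * j ∈ J₁}

/-- The image of `R` in its total quotient ring `T(R)`, as a set. -/
def Rset (R : Type*) [CommRing R] : Set (FractionRing R) :=
  Set.range (algebraMap R (FractionRing R))

/-- The image of an ideal of `R` in the total quotient ring `T(R)`. -/
def idealSet (R : Type*) [CommRing R] (I : Ideal R) : Set (FractionRing R) :=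
  algebraMap R (FractionRing R) '' (I : Set R)

/-- An ideal `I` of `R` is divisorial if `I = (R : (R : I))`. -/
def IsDivisorial (R : Type*) [CommRing R] (I : Ideal R) : Prop :=
  idealSet R I = colonSet R (Rset R) (colonSet R (Rset R) (idealSet R I))

open IsLocalRing

namespace SpecEq

variable {T : Type*} [CommRing T] {R : Subring T} [IsLocalRing R]

theorem mul_mem_maximalIdeal (h : SpecEq R) (t : T) {x : R} (hx : x ∈ maximalIdeal R) :
    t * x ∈ Subtype.val '' (maximalIdeal R : Set R) := by
  obtain ⟨J, -, hJ⟩ := (h _).mpr ⟨maximalIdeal R, inferInstance, rfl⟩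
  have hxJ : (x : T) ∈ (J : Set T) := hJ ▸ ⟨x, hx, rfl⟩
  exact hJ ▸ J.mul_mem_left t hxJ

theorem mem_maximalIdeal_of_not_isUnit (h : SpecEq R) {t : T} (ht : ¬IsUnit t) :
    t ∈ Subtype.val '' (maximalIdeal R : Set R) := by
  obtain ⟨N, hN, htN⟩ := exists_max_ideal_of_mem_nonunits ht
  obtain ⟨I, hI, hIN⟩ := (h N).mp ⟨N, hN.isPrime, rfl⟩
  obtain ⟨s, hs, rfl⟩ : t ∈ Subtype.val '' (I : Set R) := hIN ▸ htN
  exact ⟨s, le_maximalIdeal hI.ne_top hs, rfl⟩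

theorem coe_mem_nonZeroDivisors (h : SpecEq R) {x : R} (hx : x ∈ nonZeroDivisors R) :
    (x : T) ∈ nonZeroDivisors T := by
  rw [mem_nonZeroDivisors_iff_right]
  intro t hxt
  by_cases ht : IsUnit t
  · have hx0 : (x : T) = (0 : R) := ht.mul_right_eq_zero.mp hxt
    exact absurd (Subtype.ext hx0) (nonZeroDivisors.ne_zero hx)
  · obtain ⟨s, -, rfl⟩ := h.mem_maximalIdeal_of_not_isUnit ht
    have hsx : s * x = 0 := Subtype.ext hxt
    simp [mem_nonZeroDivisors_iff_right.mp hx s hsx]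

end SpecEq

theorem Subring.eq_top_of_mul_mem_span_singleton {T : Type*} [CommRing T] {R : Subring T}
    {a : R} (ha : (a : T) ∈ nonZeroDivisors T)
    (h : ∀ t : T, t * a ∈ Subtype.val '' (Ideal.span {a} : Set R)) : R = ⊤ := by
  refine (Subring.eq_top_iff' R).mpr fun t => ?_
  obtain ⟨_, hs, hst⟩ := h t
  obtain ⟨c, rfl⟩ := Ideal.mem_span_singleton'.mp hs
  have hct : (c : T) = t := (mul_cancel_right_mem_nonZeroDivisors ha).mp (by simpa using hst)
  exact hct ▸ c.2

theorem exists_mem_colonSet_not_mem_Rset {T : Type*} [CommRing T] {R : Subring T}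
    {I : Ideal R} {m : R} (hmI : m ∈ I) (hm : m ∈ nonZeroDivisors R)
    (hmT : (m : T) ∈ nonZeroDivisors T) {t : T} (ht : t ∉ R)
    (htI : ∀ x ∈ I, t * x ∈ Subtype.val '' (I : Set R)) :
    ∃ x ∈ colonSet R (Rset R) (idealSet R I), x ∉ Rset R := by
  obtain ⟨s, -, hs⟩ := htI m hmI
  refine ⟨IsLocalization.mk' _ s ⟨m, hm⟩, ?_, ?_⟩
  · rintro _ ⟨a, ha, rfl⟩
    obtain ⟨b, -, hb⟩ := htI a ha
    have hsa : a * s = m * b := Subtype.ext (by push_cast; rw [hs, hb]; ring)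
    refine ⟨b, ?_⟩
    rw [mul_comm, IsLocalization.mul_mk'_eq_mk'_of_mul, hsa]
    exact (IsLocalization.mk'_mul_cancel_left b ⟨m, hm⟩).symm
  · rintro ⟨r, hr⟩
    have hsr := IsLocalization.mk'_eq_iff_eq_mul.mp hr.symm
    rw [← map_mul] at hsr
    have hrt : (r : T) = t := (mul_cancel_right_mem_nonZeroDivisors hmT).mp <| by
      rw [← hs]; exact congrArg Subtype.val (IsFractionRing.injective R _ hsr).symm
    exact ht (hrt ▸ r.2)

theorem isDivisorial_maximalIdeal_of_exists {R : Type*} [CommRing R] [IsLocalRing R]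
    (h : ∃ y ∈ colonSet R (Rset R) (idealSet R (maximalIdeal R)), y ∉ Rset R) :
    IsDivisorial R (maximalIdeal R) := by
  obtain ⟨y, hy, hyR⟩ := h
  ext x
  constructor
  · rintro ⟨a, ha, rfl⟩ j hj
    rw [mul_comm]
    exact hj _ ⟨a, ha, rfl⟩
  · intro hx
    have hone : (1 : FractionRing R) ∈ colonSet R (Rset R) (idealSet R (maximalIdeal R)) := by
      rintro _ ⟨a, -, rfl⟩
      exact ⟨a, (one_mul _).symm⟩
    obtain ⟨r, rfl⟩ : x ∈ Rset R := by simpa using hx 1 hone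
    refine ⟨r, ?_, rfl⟩
    by_contra hr
    have hu : IsUnit r := by simpa [mem_maximalIdeal, mem_nonunits_iff] using hr
    obtain ⟨z, hz⟩ := hx y hy
    refine hyR ⟨↑hu.unit⁻¹ * z, ?_⟩
    rw [map_mul, hz, ← mul_assoc, ← map_mul, hu.val_inv_mul, map_one, one_mul]

open IsLocalRing in
/-- Let `R` be a local ring whose maximal ideal `M` contains a
non-zero-divisor of `R`, and assume `M` is either principal or non-divisorial.  Then there
is no ring `T` properly containing `R` with `Spec(R) = Spec(T)`: for any ring `T` and any
realization of `R` as a proper subring of `T`, `Spec(R) ≠ Spec(T)`. -/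
theorem stmt19 {T : Type*} [CommRing T] (R : Subring T) [IsLocalRing ↥R]
    (hreg : ∃ x ∈ maximalIdeal ↥R, x ∈ nonZeroDivisors ↥R)
    (hM : (maximalIdeal ↥R).IsPrincipal ∨ ¬ IsDivisorial ↥R (maximalIdeal ↥R))
    (hproper : R ≠ ⊤) : ¬ SpecEq R := by
  intro hspec
  obtain ⟨m, hmM, hm⟩ := hreg
  rcases hM with ⟨a, ha⟩ | hnd
  · have haT : (a : T) ∈ nonZeroDivisors T := by
      rw [ha] at hmM
      obtain ⟨c, rfl⟩ := Ideal.mem_span_singleton'.mp hmM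
      exact hspec.coe_mem_nonZeroDivisors (mul_mem_nonZeroDivisors.mp hm).2
    have hspan : Ideal.span {a} = maximalIdeal R := ha.symm
    exact hproper <| Subring.eq_top_of_mul_mem_span_singleton haT fun t =>
      hspan ▸ hspec.mul_mem_maximalIdeal t (hspan ▸ Ideal.mem_span_singleton_self a)
  · obtain ⟨t, ht⟩ : ∃ t, t ∉ R := by simpa [Subring.eq_top_iff'] using hproper
    exact hnd <| isDivisorial_maximalIdeal_of_exists <| exists_mem_colonSet_not_mem_Rset hmM hm
      (hspec.coe_mem_nonZeroDivisors hm) ht fun _ hx => hspec.mul_mem_maximalIdeal t hx
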